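/- Let G be a finite directed acyclic graph with at most one directed path between any pair of vertices, with reachability order ≤ and path-length function d. Let p be prime, let G' be the graph with edges {uv : u < v, d(u,v) ≢ 0 mod p}, and let H be an induced subgraph of G' with clique number n < p. Then the chromatic number of H is at most n^(n(n+1)/2). -/

import Mathlib

/-- `l` is a directed path from `u` to `v` in the digraph `A`. -/
def DiPathFrom {V : Type*} (A : V → V → Prop) (l : List V) (u v : V) : Prop :=
  l.Chain' A ∧ l.Nodup ∧ l.head? = some u ∧ l.getLast? = some v

/-- Directed reachability: there is a directed path from `u` to `v`. -/
def Reach {V : Type*} (A : V → V → Prop) (u v : V) : Prop :=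
  ∃ l : List V, DiPathFrom A l u v

/-- The graph `G'_p`. -/
def shiftGraph {V : Type*} (A : V → V → Prop) (d : V → V → ℕ) (p : ℕ) : SimpleGraph V where
  Adj u v := u ≠ v ∧ ((Reach A u v ∧ ¬ p ∣ d u v) ∨ (Reach A v u ∧ ¬ p ∣ d v u))
  symm := by constructor; intro u v h; exact ⟨h.1.symm, h.2.symm⟩
  loopless := by constructor; intro v h; exact h.1 rfl

/-!
Label each nonzero residue `r mod p` by the largest Farey fraction of order `n` below `r / p`;
there are at most `n(n+1)/2` labels. If `m ≤ n` residues `r₁, …, rₘ` with a common label summed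
to `k p`, the Farey fraction `k / m` would be the mean of the `rᵢ / p`, yet it equals none of them
(`p > n` is prime) and cannot separate two of them, since they lie in one gap between consecutive
Farey fractions. Distances add along directed paths, so on a directed walk of arcs with a common
label any `n + 1` consecutive vertices form a clique of `G'_p`. When the clique number is `n`
these walks thus have fewer than `n` steps, and ranking every vertex by the longest walk of each
label ending there is a proper colouring with `n ^ (number of labels)` colours.
-/

open Finset Relation

section Paths

variable {V : Type*} {A : V → V → Prop}

theorem DiPathFrom.singleton (u : V) : DiPathFrom A [u] u u :=
  ⟨List.isChain_singleton u, List.nodup_singleton u, rfl, rfl⟩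

theorem Reach.refl (u : V) : Reach A u u :=
  ⟨[u], .singleton u⟩

theorem DiPathFrom.reflTransGen_of_mem {l : List V} {u v x : V} (h : DiPathFrom A l u v)
    (hx : x ∈ l) : ReflTransGen A u x ∧ ReflTransGen A x v := by
  obtain ⟨hc, -, hh, hl⟩ := h
  have hc : l.IsChain A := hc
  refine ⟨hc.induction (ReflTransGen A u ·) _ (fun _ _ hab h => h.tail hab) (fun lne => ?_) x hx,
    hc.backwards_induction (ReflTransGen A · v) _ (fun _ _ hab h => h.head hab)
      (fun lne => ?_) x hx⟩
  · rw [List.head?_eq_some_head lne, Option.some_inj] at hh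
    rw [hh]
  · rw [List.getLast?_eq_some_getLast lne, Option.some_inj] at hl
    rw [hl]

/-- Acyclicity makes the two paths meet only at `v`, so gluing them gives a path. -/
theorem DiPathFrom.append_tail (hacyc : ∀ x, ¬ TransGen A x x) {l t : List V} {u v w : V}
    (h₁ : DiPathFrom A l u v) (h₂ : DiPathFrom A (v :: t) v w) : DiPathFrom A (l ++ t) u w := by
  have hvt : v ∉ t := (List.nodup_cons.1 h₂.2.1).1
  refine ⟨?_, ?_, ?_, ?_⟩
  · refine List.IsChain.append h₁.1 (List.IsChain.tail h₂.1 (l := v :: t)) ?_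
    intro x hx y hy
    rw [h₁.2.2.2, Option.mem_some_iff] at hx
    subst hx
    exact List.IsChain.rel_head? h₂.1 hy
  · refine List.nodup_append.2 ⟨h₁.2.1, (List.nodup_cons.1 h₂.2.1).2, ?_⟩
    rintro x hxl _ hxt rfl
    have hxv : ReflTransGen A x v := (h₁.reflTransGen_of_mem hxl).2
    have hvx : ReflTransGen A v x := (h₂.reflTransGen_of_mem (List.mem_cons_of_mem v hxt)).1
    rcases reflTransGen_iff_eq_or_transGen.1 hxv with rfl | hxv
    · exact hvt hxt
    · exact hacyc x (hxv.trans_left hvx)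
  · simp [List.head?_append, h₁.2.2.1]
  · have hw := h₂.2.2.2
    rw [List.getLast?_cons, Option.some_inj] at hw
    cases ht : t.getLast? <;> simp_all [List.getLast?_append, h₁.2.2.2]

variable {d : V → V → ℕ}
  (hd : ∀ (u v : V) (l : List V), DiPathFrom A l u v → l.length = d u v + 1)
include hd

theorem dist_self_eq_zero (u : V) : d u u = 0 := by
  simpa using (hd u u [u] (.singleton u)).symm

theorem Reach.trans_and_dist_eq_add (hacyc : ∀ x, ¬ TransGen A x x) {u v w : V}
    (h₁ : Reach A u v) (h₂ : Reach A v w) : Reach A u w ∧ d u w = d u v + d v w := by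
  obtain ⟨l, hl⟩ := h₁
  obtain ⟨_ | ⟨v', t⟩, ht⟩ := h₂
  · simp [DiPathFrom] at ht
  obtain rfl : v' = v := by simpa using ht.2.2.1
  have hpath := hl.append_tail hacyc ht
  refine ⟨⟨_, hpath⟩, ?_⟩
  have := hd _ _ _ hpath
  have := hd _ _ _ hl
  have := hd _ _ _ ht
  simp only [List.length_append, List.length_cons] at *
  omega

theorem reach_and_dist_eq_sum (hacyc : ∀ x, ¬ TransGen A x x) {f : ℕ → V} {i j : ℕ}
    (hij : i ≤ j) (hf : ∀ t ∈ Ico i j, Reach A (f t) (f (t + 1))) :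
    Reach A (f i) (f j) ∧ d (f i) (f j) = ∑ t ∈ Ico i j, d (f t) (f (t + 1)) := by
  induction j, hij using Nat.le_induction with
  | base => simp [Reach.refl, dist_self_eq_zero hd]
  | succ j hij ih =>
    obtain ⟨hr, hsum⟩ := ih fun t ht => hf t (Ico_subset_Ico_right j.le_succ ht)
    obtain ⟨hr', hdist⟩ :=
      hr.trans_and_dist_eq_add hd hacyc (hf j (mem_Ico.2 ⟨hij, j.lt_succ_self⟩))
    exact ⟨hr', by rw [sum_Ico_succ_top hij, hdist, hsum]⟩

end Paths

section MaxBelow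

variable {α : Type*} [LinearOrder α] [Inhabited α]

/-- The largest element of `C` strictly below `x`, or `default` if there is none. -/
noncomputable def maxBelow (C : Finset α) (x : α) : α :=
  (C.filter (· < x)).max.unbotD default

variable {C : Finset α} {c x : α}

theorem maxBelow_eq_max' (h : (C.filter (· < x)).Nonempty) :
    maxBelow C x = (C.filter (· < x)).max' h := by
  rw [maxBelow, ← coe_max' h, WithBot.unbotD_coe]

theorem le_maxBelow (hc : c ∈ C) (hcx : c < x) : c ≤ maxBelow C x := by
  have hmem : c ∈ C.filter (· < x) := mem_filter.2 ⟨hc, hcx⟩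
  rw [maxBelow_eq_max' ⟨c, hmem⟩]
  exact le_max' _ c hmem

theorem maxBelow_mem (hc : c ∈ C) (hcx : c < x) : maxBelow C x ∈ C := by
  have hne : (C.filter (· < x)).Nonempty := ⟨c, mem_filter.2 ⟨hc, hcx⟩⟩
  rw [maxBelow_eq_max' hne]
  exact (mem_filter.1 (max'_mem _ hne)).1

theorem maxBelow_lt (hc : c ∈ C) (hcx : c < x) : maxBelow C x < x := by
  have hne : (C.filter (· < x)).Nonempty := ⟨c, mem_filter.2 ⟨hc, hcx⟩⟩
  rw [maxBelow_eq_max' hne]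
  exact (mem_filter.1 (max'_mem _ hne)).2

end MaxBelow

section Farey

def fareySet (n : ℕ) : Finset ℚ :=
  (range (n + 1)).biUnion fun b => (range b).image fun a : ℕ => (a : ℚ) / b

theorem mem_fareySet {n a b : ℕ} (hab : a < b) (hbn : b ≤ n) : (a : ℚ) / b ∈ fareySet n :=
  mem_biUnion.2 ⟨b, mem_range.2 (Nat.lt_succ_of_le hbn), mem_image_of_mem _ (mem_range.2 hab)⟩

theorem card_fareySet_le (n : ℕ) : #(fareySet n) ≤ n * (n + 1) / 2 :=
  calc #(fareySet n) ≤ ∑ b ∈ range (n + 1), #((range b).image fun a : ℕ => (a : ℚ) / b) :=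
        card_biUnion_le
    _ ≤ ∑ b ∈ range (n + 1), b := sum_le_sum fun b _ => card_image_le.trans (card_range b).le
    _ = n * (n + 1) / 2 := by rw [sum_range_id, Nat.add_sub_cancel, Nat.mul_comm]

theorem pow_card_fareySet_le (n : ℕ) : n ^ #(fareySet n) ≤ n ^ (n * (n + 1) / 2) := by
  rcases n.eq_zero_or_pos with rfl | hn
  · simp [fareySet]
  · exact Nat.pow_le_pow_right hn (card_fareySet_le n)

theorem natCast_div_notMem_fareySet {p n r : ℕ} (hp : p.Prime) (hnp : n < p) (hr : 0 < r)
    (hrp : r < p) : (r : ℚ) / p ∉ fareySet n := by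
  simp only [fareySet, mem_biUnion, mem_range, mem_image]
  rintro ⟨b, hbn, a, hab, heq⟩
  have hb : (0 : ℚ) < b := by exact_mod_cast (Nat.zero_le a).trans_lt hab
  have hp0 : (0 : ℚ) < p := by exact_mod_cast hp.pos
  have hcross : a * p = r * b := by
    rw [div_eq_div_iff hb.ne' hp0.ne'] at heq
    exact_mod_cast heq
  rcases (Nat.Prime.dvd_mul hp).1 (Dvd.intro_left a hcross) with h | h
  · exact absurd (Nat.le_of_dvd hr h) hrp.not_ge
  · exact absurd (Nat.le_of_dvd (by exact_mod_cast hb) h) (by omega)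

end Farey

theorem sum_ne_natCast_of_maxBelow_eq {ι : Type*} {s : Finset ι} {n : ℕ} (hs : s.Nonempty)
    (hsn : #s ≤ n) {x : ι → ℚ} (hx0 : ∀ i ∈ s, 0 < x i) (hx1 : ∀ i ∈ s, x i < 1)
    (hxF : ∀ i ∈ s, x i ∉ fareySet n) {q : ℚ} (hq : ∀ i ∈ s, maxBelow (fareySet n) (x i) = q)
    (k : ℕ) : ∑ i ∈ s, x i ≠ k := by
  intro hk
  have hm : (0 : ℚ) < #s := by exact_mod_cast hs.card_pos
  have h0 : (0 : ℚ) ∈ fareySet n := by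
    simpa using mem_fareySet (a := 0) (b := 1) one_pos (hs.card_pos.trans_le hsn)
  have hkm : k < #s := by
    have := sum_lt_sum_of_nonempty hs hx1
    simp only [sum_const, nsmul_eq_mul, mul_one] at this
    exact_mod_cast hk ▸ this
  set c : ℚ := k / #s
  have hc : c ∈ fareySet n := mem_fareySet hkm hsn
  have hsum_c : ∑ _i ∈ s, c = k := by
    rw [sum_const, nsmul_eq_mul]
    exact mul_div_cancel₀ _ hm.ne'
  have hne : ∀ i ∈ s, x i ≠ c := fun i hi h => hxF i hi (h ▸ hc)
  -- `c` is a Farey fraction, so it cannot separate two points of the same gap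
  have hside : ∀ i ∈ s, ∀ j ∈ s, c < x i → c < x j := fun i hi j hj hci =>
    calc c ≤ maxBelow (fareySet n) (x i) := le_maxBelow hc hci
      _ = maxBelow (fareySet n) (x j) := (hq i hi).trans (hq j hj).symm
      _ < x j := maxBelow_lt h0 (hx0 j hj)
  obtain ⟨i₀, hi₀⟩ := hs
  rcases (hne i₀ hi₀).lt_or_gt with hlt | hgt
  · have hall : ∀ j ∈ s, x j < c := fun j hj =>
      (hne j hj).lt_of_le (not_lt.1 fun hcj => (hside j hj i₀ hi₀ hcj).not_gt hlt)
    linarith [sum_lt_sum_of_nonempty ⟨i₀, hi₀⟩ hall]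
  · linarith [sum_lt_sum_of_nonempty ⟨i₀, hi₀⟩ fun j hj => hside i₀ hi₀ j hj hgt]

/-- The classes `A_i` of the paper are the fibres of `fareyClass n p` on nonzero residues. -/
noncomputable def fareyClass (n p r : ℕ) : ℚ :=
  maxBelow (fareySet n) ((r % p : ℕ) / p : ℚ)

theorem fareyClass_mem {n p r : ℕ} (hn : 0 < n) (hp : 0 < p) (hr : ¬ p ∣ r) :
    fareyClass n p r ∈ fareySet n := by
  refine maxBelow_mem (c := 0) (by simpa using mem_fareySet (a := 0) (b := 1) one_pos hn) ?_
  have : 0 < r % p := Nat.pos_of_ne_zero fun h => hr (Nat.dvd_of_mod_eq_zero h)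
  positivity

theorem not_dvd_sum_of_fareyClass_eq {ι : Type*} {p n : ℕ} (hp : p.Prime) (hnp : n < p)
    {s : Finset ι} (hs : s.Nonempty) (hsn : #s ≤ n) {g : ι → ℕ} (hg : ∀ i ∈ s, ¬ p ∣ g i)
    {q : ℚ} (hq : ∀ i ∈ s, fareyClass n p (g i) = q) : ¬ p ∣ ∑ i ∈ s, g i := by
  intro hdvd
  have hres : ∀ i ∈ s, 0 < g i % p := fun i hi =>
    Nat.pos_of_ne_zero fun h => hg i hi (Nat.dvd_of_mod_eq_zero h)
  obtain ⟨k, hk⟩ : p ∣ ∑ i ∈ s, g i % p := by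
    rwa [Nat.dvd_iff_mod_eq_zero, ← sum_nat_mod, ← Nat.dvd_iff_mod_eq_zero]
  have hp0 : (p : ℚ) ≠ 0 := by exact_mod_cast hp.ne_zero
  refine sum_ne_natCast_of_maxBelow_eq hs hsn (x := fun i => ((g i % p : ℕ) : ℚ) / p)
    (fun i hi => by have := hres i hi; positivity)
    (fun i _ => (div_lt_one (by exact_mod_cast hp.pos)).2 (by exact_mod_cast Nat.mod_lt _ hp.pos))
    (fun i hi => natCast_div_notMem_fareySet hp hnp (hres i hi) (Nat.mod_lt _ hp.pos)) hq k ?_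
  rw [← sum_div, div_eq_iff hp0, ← Nat.cast_sum, hk]
  push_cast
  ring

theorem exists_rank_of_no_walk {W : Type*} {R : W → W → Prop} {n : ℕ}
    (h : ∀ f : ℕ → W, ¬ ∀ i < n, R (f i) (f (i + 1))) :
    ∃ rank : W → Fin n, ∀ ⦃u v⦄, R u v → rank u < rank v := by
  classical
  let IsWalkTo (v : W) (k : ℕ) : Prop := ∃ f : ℕ → W, (∀ i < k, R (f i) (f (i + 1))) ∧ f k = v
  let height (v : W) : ℕ := Nat.findGreatest (IsWalkTo v) n
  have hwalk (v : W) : IsWalkTo v (height v) := Nat.findGreatest_spec (Nat.zero_le n)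
    ⟨fun _ => v, fun _ h => absurd h (Nat.not_lt_zero _), rfl⟩
  have hlt (v : W) : height v < n := by
    refine (Nat.findGreatest_le n).lt_of_ne fun heq => ?_
    obtain ⟨f, hf, -⟩ := hwalk v
    exact h f (heq ▸ hf)
  refine ⟨fun v => ⟨height v, hlt v⟩, fun u v huv => ?_⟩
  obtain ⟨f, hf, hfu⟩ := hwalk u
  have hext : IsWalkTo v (height u + 1) := by
    refine ⟨Function.update f (height u + 1) v, fun i hi => ?_, by simp⟩
    rcases (Nat.lt_succ_iff.1 hi).lt_or_eq with hi | rfl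
    · simpa [Function.update_of_ne (show i ≠ height u + 1 by omega),
        Function.update_of_ne (show i + 1 ≠ height u + 1 by omega)] using hf i hi
    · simpa [hfu] using huv
  exact Nat.le_findGreatest (hlt u) hext

theorem SimpleGraph.le_cliqueNum_of_adj {α : Type*} [Finite α] {G : SimpleGraph α} {k : ℕ}
    {f : Fin k → α} (hf : ∀ i j, i < j → G.Adj (f i) (f j)) : k ≤ G.cliqueNum := by
  classical
  have hadj : ∀ i j, i ≠ j → G.Adj (f i) (f j) := fun i j hne =>
    hne.lt_or_gt.elim (hf i j) fun h => (hf j i h).symm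
  have hinj : f.Injective := fun i j hij => by_contra fun hne => (hadj i j hne).ne hij
  have hclique : G.IsClique (univ.image f : Set α) := by
    rintro _ hx _ hy hxy
    obtain ⟨i, -, rfl⟩ := mem_image.1 hx
    obtain ⟨j, -, rfl⟩ := mem_image.1 hy
    exact hadj i j fun h => hxy (h ▸ rfl)
  simpa [card_image_of_injective _ hinj] using hclique.card_le_cliqueNum

section ClassArcs

variable {V : Type*} (A : V → V → Prop) (d : V → V → ℕ) (p n : ℕ)

/-- The edge class `E_q` of the paper, oriented along reachability. -/
def ClassArc (q : ℚ) (u v : V) : Prop :=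
  Reach A u v ∧ ¬ p ∣ d u v ∧ fareyClass n p (d u v) = q

variable {A d p n}

theorem exists_classArc_of_adj (hn : 0 < n) (hp : 0 < p) {u v : V}
    (h : (shiftGraph A d p).Adj u v) :
    ∃ q ∈ fareySet n, ClassArc A d p n q u v ∨ ClassArc A d p n q v u := by
  rcases h.2 with ⟨hr, hnd⟩ | ⟨hr, hnd⟩
  · exact ⟨_, fareyClass_mem hn hp hnd, Or.inl ⟨hr, hnd, rfl⟩⟩
  · exact ⟨_, fareyClass_mem hn hp hnd, Or.inr ⟨hr, hnd, rfl⟩⟩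

theorem shiftGraph_adj_of_classArc_walk (hp : p.Prime) (hnp : n < p)
    (hacyc : ∀ x, ¬ TransGen A x x)
    (hd : ∀ (u v : V) (l : List V), DiPathFrom A l u v → l.length = d u v + 1)
    {q : ℚ} {f : ℕ → V} {i j : ℕ} (hij : i < j) (hjn : j ≤ i + n)
    (hf : ∀ t ∈ Ico i j, ClassArc A d p n q (f t) (f (t + 1))) :
    (shiftGraph A d p).Adj (f i) (f j) := by
  obtain ⟨hreach, hdist⟩ := reach_and_dist_eq_sum hd hacyc hij.le fun t ht => (hf t ht).1
  have hndvd : ¬ p ∣ d (f i) (f j) := hdist ▸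
    not_dvd_sum_of_fareyClass_eq hp hnp (nonempty_Ico.2 hij) (by rw [Nat.card_Ico]; omega)
      (fun t ht => (hf t ht).2.1) (fun t ht => (hf t ht).2.2)
  refine ⟨fun heq => hndvd ?_, Or.inl ⟨hreach, hndvd⟩⟩
  rw [heq, dist_self_eq_zero hd]
  exact dvd_zero p

end ClassArcs

theorem stmt9_general {V : Type*} [Fintype V] (A : V → V → Prop)
    (hacyc : ∀ x : V, ¬ Relation.TransGen A x x)
    (d : V → V → ℕ)
    (hd : ∀ (u v : V) (l : List V), DiPathFrom A l u v → l.length = d u v + 1)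
    (p : ℕ) (hp : p.Prime) (S : Set V) (n : ℕ)
    (hclique : ((shiftGraph A d p).induce S).cliqueNum = n) (hnp : n < p) :
    ((shiftGraph A d p).induce S).chromaticNumber ≤ (n ^ (n * (n + 1) / 2) : ℕ) := by
  classical
  set H := (shiftGraph A d p).induce S
  have hno_walk (q : ℚ) (f : ℕ → S) : ¬ ∀ i < n, ClassArc A d p n q (f i) (f (i + 1)) := by
    intro hf
    have : n + 1 ≤ H.cliqueNum :=
      SimpleGraph.le_cliqueNum_of_adj (f := fun i : Fin (n + 1) => f i) fun i j hij =>
        shiftGraph_adj_of_classArc_walk hp hnp hacyc hd hij (by omega) fun t ht =>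
          hf t (by rw [mem_Ico] at ht; omega)
    omega
  choose rank hrank using fun q =>
    exists_rank_of_no_walk (R := fun a b : S => ClassArc A d p n q a b) (hno_walk q)
  let c : H.Coloring (fareySet n → Fin n) := SimpleGraph.Coloring.mk (fun a q => rank q a)
    fun {a b} hab heq => by
      have hn : 0 < n := (rank 0 a).pos
      obtain ⟨q, hq, hab | hba⟩ := exists_classArc_of_adj hn hp.pos hab
      · exact (hrank q hab).ne (congrFun heq ⟨q, hq⟩)
      · exact (hrank q hba).ne' (congrFun heq ⟨q, hq⟩)
  calc H.chromaticNumber ≤ (n ^ #(fareySet n) : ℕ) := by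
        simpa using c.colorable.chromaticNumber_le
    _ ≤ _ := by exact_mod_cast pow_card_fareySet_le n

/-- Any induced subgraph of `G'_p` with clique number `n < p` has chromatic number at
most `n^(n(n+1)/2)`. -/
theorem stmt9 {V : Type*} [Fintype V] (A : V → V → Prop)
    (hacyc : ∀ x : V, ¬ Relation.TransGen A x x)
    (huniq : ∀ (u v : V) (l₁ l₂ : List V),
      DiPathFrom A l₁ u v → DiPathFrom A l₂ u v → l₁ = l₂)
    (d : V → V → ℕ)
    (hd : ∀ (u v : V) (l : List V), DiPathFrom A l u v → l.length = d u v + 1)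
    (p : ℕ) (hp : p.Prime) (S : Set V) (n : ℕ)
    (hclique : ((shiftGraph A d p).induce S).cliqueNum = n) (hnp : n < p) :
    ((shiftGraph A d p).induce S).chromaticNumber ≤ (n ^ (n * (n + 1) / 2) : ℕ) :=
  stmt9_general A hacyc d hd p hp S n hclique hnp
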